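/- arXiv:2207.12684 — 4 statements merged into one kernel-verified Lean document; each statement's English description precedes it below -/
import Mathlib

section
/- For every ε > 0 there exists a constant C_ε > 0 such that for any two relatively prime integers a, b and any natural number D, there is a natural number k ≤ C_ε · D^ε with gcd(a + k·b, D) = 1. -/
/-!
Primes of `D` dividing `b` never divide `a + k * b`. Pick `T` with `T ^ T ≤ D < (T + 1) ^ (T + 1)`;
then at most `T` prime factors of `D` exceed `T`. The product `P` of the other prime factors of `D`
not dividing `b` is at most `4 ^ T`, and we choose `r < P` with `a + r * b ≡ 1 [ZMOD P]`. Along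
`k = r + (j + 1) * P`, `j ≤ T`, a large prime factor `p` divides `a + k * b` for at most one `j`,
since the `j` are fewer than `p` and distinct modulo `p`; so some `k ≤ (T + 2) * 4 ^ T` works. As
`T ≈ log D / log log D`, this bound is `D ^ o(1)`.
-/

open Finset

lemma Int.gcd_natCast_eq_one_of_forall_prime {x : ℤ} {D : ℕ}
    (h : ∀ p, p.Prime → p ∣ D → ¬ (p : ℤ) ∣ x) : Int.gcd x D = 1 := by
  rw [Int.gcd_eq_natAbs, Int.natAbs_natCast]
  exact Nat.Coprime.symm <|
    Nat.coprime_of_dvd fun p hp hpD hpx => h p hp hpD (Int.natCast_dvd.2 hpx)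

lemma Nat.Prime.not_dvd_prod_of_forall_le {p T : ℕ} (hp : p.Prime) (hTp : T < p) {S : Finset ℕ}
    (hS : ∀ q ∈ S, q.Prime ∧ q ≤ T) : ¬ p ∣ ∏ q ∈ S, q := fun h => by
  obtain ⟨q, hq, hpq⟩ := (Prime.dvd_finsetProd_iff hp.prime _).1 h
  have := (Nat.prime_dvd_prime_iff_eq hp (hS q hq).1).1 hpq
  have := (hS q hq).2
  omega

lemma exists_lt_dvd_add_mul_sub_one {P : ℕ} (hP : 0 < P) {b : ℤ} (h : IsCoprime (P : ℤ) b)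
    (a : ℤ) : ∃ r < P, (P : ℤ) ∣ a + r * b - 1 := by
  obtain ⟨u, v, huv⟩ := h
  have hr₀ : 0 ≤ v * (1 - a) % P := Int.emod_nonneg _ (by omega)
  have hrP : v * (1 - a) % P < P := Int.emod_lt_of_pos _ (by omega)
  refine ⟨(v * (1 - a) % P).toNat, by omega, ?_⟩
  rw [Int.toNat_of_nonneg hr₀]
  obtain ⟨q, hq⟩ : (P : ℤ) ∣ v * (1 - a) % P - v * (1 - a) := (Int.mod_modEq _ _).symm.dvd
  exact ⟨q * b + (a - 1) * u, by linear_combination b * hq + (1 - a) * huv⟩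

lemma eq_of_dvd_add_mul_of_lt {p : ℕ} (hp : p.Prime) {c : ℤ} (hc : ¬ (p : ℤ) ∣ c) {x : ℤ}
    {i j : ℕ} (hi : i < p) (hj : j < p) (hxi : (p : ℤ) ∣ x + i * c) (hxj : (p : ℤ) ∣ x + j * c) :
    i = j := by
  have hdvd := dvd_sub hxi hxj
  rw [add_sub_add_left_eq_sub, ← sub_mul] at hdvd
  have hij := ((Nat.prime_iff_prime_int.mp hp).dvd_or_dvd hdvd).resolve_right hc
  have := Int.eq_zero_of_abs_lt_dvd hij (abs_sub_lt_iff.2 ⟨by omega, by omega⟩)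
  omega

lemma exists_le_card_forall_not_dvd_add_mul {S : Finset ℕ} {c : ℤ}
    (hS : ∀ p ∈ S, p.Prime ∧ #S < p ∧ ¬ (p : ℤ) ∣ c) (x : ℤ) :
    ∃ j ≤ #S, ∀ p ∈ S, ¬ (p : ℤ) ∣ x + j * c := by
  by_contra! h
  choose! f hfS hf using h
  obtain ⟨i, hi, j, hj, hij, hfij⟩ := exists_ne_map_eq_of_card_lt_of_maps_to (s := range (#S + 1))
    (by simp) (fun j hj => hfS j (Nat.lt_succ_iff.1 (mem_range.1 hj)))
  rw [mem_range] at hi hj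
  obtain ⟨hp, hSp, hpc⟩ := hS (f i) (hfS i (by omega))
  exact hij (eq_of_dvd_add_mul_of_lt hp hpc (by omega) (by omega) (hf i (by omega))
    (hfij ▸ hf j (by omega)))

lemma prod_le_four_pow {S : Finset ℕ} {T : ℕ} (hS : ∀ p ∈ S, p.Prime ∧ p ≤ T) :
    ∏ p ∈ S, p ≤ 4 ^ T :=
  calc ∏ p ∈ S, p ≤ primorial T :=
        prod_le_prod_of_subset_of_one_le'
          (fun p hp => mem_filter.2 ⟨mem_range.2 (Nat.lt_succ_of_le (hS p hp).2), (hS p hp).1⟩)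
          (fun _ hp _ => (mem_filter.1 hp).2.one_lt.le)
    _ ≤ 4 ^ T := primorial_le_four_pow T

lemma pow_card_filter_primeFactors_lt_le {n : ℕ} (hn : n ≠ 0) (T : ℕ) :
    (T + 1) ^ #{p ∈ n.primeFactors | T < p} ≤ n :=
  calc (T + 1) ^ #{p ∈ n.primeFactors | T < p}
      ≤ ∏ p ∈ n.primeFactors with T < p, p := pow_card_le_prod _ _ _ fun _ hp => (mem_filter.1 hp).2
    _ ≤ ∏ p ∈ n.primeFactors, p := prod_le_prod_of_subset_of_one_le' (filter_subset _ _)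
        fun _ hp _ => (Nat.prime_of_mem_primeFactors hp).one_lt.le
    _ ≤ n := Nat.le_of_dvd (Nat.pos_of_ne_zero hn) (Nat.prod_primeFactors_dvd n)

lemma card_filter_primeFactors_lt_le {n T : ℕ} (hn : n ≠ 0) (h : n < (T + 1) ^ (T + 1)) :
    #{p ∈ n.primeFactors | T < p} ≤ T := by
  by_contra! hT
  exact h.not_ge <|
    (pow_le_pow_right₀ (by omega) hT).trans (pow_card_filter_primeFactors_lt_le hn T)

lemma exists_pow_self_le_lt {n : ℕ} (hn : n ≠ 0) : ∃ T : ℕ, T ^ T ≤ n ∧ n < (T + 1) ^ (T + 1) := by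
  have hex : ∃ T : ℕ, n < (T + 1) ^ (T + 1) :=
    ⟨n, (Nat.lt_succ_self n).trans_le (Nat.le_self_pow n.succ_ne_zero _)⟩
  cases h : Nat.find hex with
  | zero => have := Nat.find_spec hex; simp only [h, zero_add, pow_one] at this; omega
  | succ t => exact ⟨t + 1, not_lt.1 (Nat.find_min hex (by omega)), h ▸ Nat.find_spec hex⟩

lemma exists_add_two_mul_four_pow_le {ε : ℝ} (hε : 0 < ε) :
    ∃ C > 0, ∀ T : ℕ, ((T + 2) * 4 ^ T : ℝ) ≤ C * ((T : ℝ) ^ T) ^ ε := by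
  obtain ⟨N, hN⟩ := Filter.eventually_atTop.1 <|
    ((tendsto_rpow_atTop hε).comp tendsto_natCast_atTop_atTop).eventually_ge_atTop 8
  refine ⟨max 3 (((N : ℝ) + 2) * 4 ^ N), by positivity, fun T => ?_⟩
  rcases le_or_gt N T with hNT | hTN
  · have hT : (T : ℝ) + 2 ≤ 3 * 2 ^ T := by
      have := @Nat.lt_two_pow_self T
      exact_mod_cast (by omega : T + 2 ≤ 3 * 2 ^ T)
    calc ((T : ℝ) + 2) * 4 ^ T ≤ 3 * 8 ^ T := by
          rw [show (8 : ℝ) = 2 * 4 by norm_num, mul_pow, ← mul_assoc]; gcongr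
      _ ≤ 3 * ((T : ℝ) ^ ε) ^ T := by gcongr; exact hN T hNT
      _ = 3 * ((T : ℝ) ^ T) ^ ε := by rw [Real.rpow_pow_comm (Nat.cast_nonneg T)]
      _ ≤ _ := by gcongr; exact le_max_left _ _
  · have hT : (1 : ℝ) ≤ (T : ℝ) ^ T := by exact_mod_cast Nat.pow_self_pos
    calc ((T : ℝ) + 2) * 4 ^ T ≤ (N + 2) * 4 ^ N := by gcongr; norm_num
      _ ≤ max 3 (((N : ℝ) + 2) * 4 ^ N) := le_max_right _ _
      _ ≤ _ := le_mul_of_one_le_right (by positivity) (Real.one_le_rpow hT hε.le)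

theorem exists_gcd_add_mul_eq_one_le {a b : ℤ} (hab : IsCoprime a b) {D : ℕ} (hD : D ≠ 0) {T : ℕ}
    (hT : #{p ∈ D.primeFactors | T < p} ≤ T) :
    ∃ k : ℕ, 1 ≤ k ∧ k ≤ (T + 2) * 4 ^ T ∧ Int.gcd (a + k * b) D = 1 := by
  set S₀ := {p ∈ D.primeFactors | p ≤ T ∧ ¬ (p : ℤ) ∣ b}
  set S₁ := {p ∈ D.primeFactors | T < p ∧ ¬ (p : ℤ) ∣ b}
  set P := ∏ p ∈ S₀, p
  have hS₀ : ∀ p ∈ S₀, p.Prime ∧ p ≤ T := fun p hp =>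
    ⟨Nat.prime_of_mem_primeFactors (mem_filter.1 hp).1, (mem_filter.1 hp).2.1⟩
  have hP : 0 < P := prod_pos fun p hp => (hS₀ p hp).1.pos
  have hPb : IsCoprime (P : ℤ) b := by
    rw [Nat.cast_prod]
    exact IsCoprime.prod_left fun p hp =>
      (Nat.prime_iff_prime_int.mp (hS₀ p hp).1).coprime_iff_not_dvd.2 (mem_filter.1 hp).2.2
  have hS₁T : #S₁ ≤ T := (card_le_card fun _ hp =>
    mem_filter.2 ⟨(mem_filter.1 hp).1, (mem_filter.1 hp).2.1⟩).trans hT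
  have hS₁ : ∀ p ∈ S₁, p.Prime ∧ #S₁ < p ∧ ¬ (p : ℤ) ∣ P * b := by
    intro p hp
    obtain ⟨hpD, hTp, hpb⟩ := mem_filter.1 hp
    have hp := Nat.prime_of_mem_primeFactors hpD
    refine ⟨hp, by omega, fun h => ?_⟩
    rcases (Nat.prime_iff_prime_int.mp hp).dvd_or_dvd h with h | h
    exacts [hp.not_dvd_prod_of_forall_le hTp hS₀ (Int.natCast_dvd_natCast.1 h), hpb h]
  obtain ⟨r, hrP, hr⟩ := exists_lt_dvd_add_mul_sub_one hP hPb a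
  obtain ⟨j, hjS₁, hj⟩ := exists_le_card_forall_not_dvd_add_mul hS₁ (a + (r + P) * b)
  refine ⟨r + (j + 1) * P, by nlinarith, ?_, ?_⟩
  · calc r + (j + 1) * P ≤ (T + 2) * P := by nlinarith
      _ ≤ (T + 2) * 4 ^ T := by gcongr; exact prod_le_four_pow hS₀
  refine Int.gcd_natCast_eq_one_of_forall_prime fun p hp hpD hpk => ?_
  have hpZ := Nat.prime_iff_prime_int.mp hp
  have hpD' : p ∈ D.primeFactors := Nat.mem_primeFactors.2 ⟨hp, hpD, hD⟩
  by_cases hpb : (p : ℤ) ∣ b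
  · exact hpZ.not_isUnit ((hab.add_mul_right_left _).isUnit_of_dvd' hpk hpb)
  rcases le_or_gt p T with hpT | hpT
  · have hpP : (p : ℤ) ∣ P :=
      Int.natCast_dvd_natCast.2 (dvd_prod_of_mem _ (mem_filter.2 ⟨hpD', hpT, hpb⟩))
    have hk : (p : ℤ) ∣ a + ↑(r + (j + 1) * P) * b - 1 := hpP.trans <| by
      convert dvd_add hr (dvd_mul_right (P : ℤ) ((j + 1) * b)) using 1; push_cast; ring
    exact hpZ.not_dvd_one (by simpa using dvd_sub hpk hk)
  · exact hj p (mem_filter.2 ⟨hpD', hpT, hpb⟩) (by convert hpk using 1; push_cast; ring)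

/-- Jacobsthal-type lemma: for every ε > 0 there is C_ε > 0 such that for any
coprime integers a, b and any positive natural number D there is a natural
number k ≤ C_ε · D^ε with gcd(a + k·b, D) = 1. -/
theorem jacobsthal_coprime_shift :
    ∀ ε : ℝ, 0 < ε → ∃ C : ℝ, 0 < C ∧
      ∀ a b : ℤ, IsCoprime a b → ∀ D : ℕ, 0 < D →
        ∃ k : ℕ, 1 ≤ k ∧ (k : ℝ) ≤ C * (D : ℝ) ^ ε ∧
          Int.gcd (a + (k : ℤ) * b) (D : ℤ) = 1 := by
  intro ε hε
  obtain ⟨C, hC, hTC⟩ := exists_add_two_mul_four_pow_le hε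
  refine ⟨C, hC, fun a b hab D hD => ?_⟩
  obtain ⟨T, hTD, hDT⟩ := exists_pow_self_le_lt hD.ne'
  obtain ⟨k, hk₁, hkT, hk⟩ :=
    exists_gcd_add_mul_eq_one_le hab hD.ne' (card_filter_primeFactors_lt_le hD.ne' hDT)
  refine ⟨k, hk₁, ?_, hk⟩
  calc (k : ℝ) ≤ (T + 2) * 4 ^ T := by exact_mod_cast hkT
    _ ≤ C * ((T : ℝ) ^ T) ^ ε := hTC T
    _ ≤ C * (D : ℝ) ^ ε := by gcongr; exact_mod_cast hTD
end

section
/- For every ε > 0 there is a constant C_ε > 0 with the following property: for any real number x and any natural number D, either (i) there is an integer c with |x − c| ≤ 1/(2(1 + C_ε D^ε)), or (ii) there exist a natural number b ≤ 2(1 + C_ε D^ε)² and an integer a with gcd(a, b·D) = 1 such that |b·x − a| ≤ 1/2. -/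
/-!
A prime `ℓ ∣ D` with `ℓ ∤ v` forbids a single residue class of `k` modulo `ℓ` in
`gcd (u + k v, D) = 1`. The primes `ℓ ≤ T` are all handled by
`k₀ = ∏ {ℓ ≤ T | ℓ ∤ u}`, which makes `u + k₀ v` coprime to `P = ∏ {ℓ ≤ T} ≤ 4 ^ T`. Along
`k₀ + j P`, `0 ≤ j ≤ m`, each of the `m` prime factors `ℓ > T` of `D` then forbids at most one `j`,
and `m ≤ T` as soon as `D < (T + 1) ^ (T + 1)`. For the least such `T` this gives
`k ≤ 8 ^ T ≤ C_ε (T ^ T) ^ ε ≤ C_ε D ^ ε`.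

Dirichlet's theorem gives `p / q` in lowest terms with `q ≤ Q = 2 (1 + C_ε D ^ ε)` and
`|q x - p| < 1 / Q`; if `q = 1` this is case (i). Otherwise choose `r / s` with `0 ≤ s < q` and
`p s - r q = ±1`, of sign opposite to `q x - p`, and put `a = r + k p`, `b = k q + s` with `k` as
above for `(u, v) = (r, p)`. Then `a` is coprime to `b` (determinant `±1`) and to `D`, and
`q (b x - a) = b (q x - p) ± 1` has absolute value at most `q / 2`.
-/

open Finset

theorem Prime.dvd_sub_of_dvd_add_mul {R : Type*} [CommRing R] {ℓ a d x y : R} (hℓ : Prime ℓ)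
    (had : IsCoprime a d) (hx : ℓ ∣ a + x * d) (hy : ℓ ∣ a + y * d) : ℓ ∣ x - y := by
  have hxy : ℓ ∣ (x - y) * d := by
    convert dvd_sub hx hy using 1
    ring
  refine (hℓ.dvd_or_dvd hxy).resolve_right fun hd => hℓ.not_isUnit (had.isUnit_of_dvd' ?_ hd)
  exact (dvd_add_left (hd.mul_left x)).mp hx

theorem Prime.not_dvd_add_mul_of_dvd {R : Type*} [CommRing R] {ℓ a d : R} (hℓ : Prime ℓ)
    (had : IsCoprime a d) (hd : ℓ ∣ d) (x : R) : ¬ ℓ ∣ a + x * d := fun h =>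
  hℓ.not_isUnit (had.isUnit_of_dvd' ((dvd_add_left (hd.mul_left x)).mp h) hd)

theorem exists_isCoprime_add_mul_prod {S : Finset ℕ} (hS : ∀ ℓ ∈ S, ℓ.Prime) {u v : ℤ}
    (huv : IsCoprime u v) :
    ∃ k : ℕ, 1 ≤ k ∧ k ≤ ∏ ℓ ∈ S, ℓ ∧ IsCoprime (u + k * v) (∏ ℓ ∈ S, (ℓ : ℤ)) := by
  set k : ℕ := ∏ ℓ ∈ S with ¬ ((ℓ : ℕ) : ℤ) ∣ u, ℓ
  refine ⟨k, one_le_prod' fun ℓ hℓ => (hS ℓ (mem_filter.mp hℓ).1).one_le,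
    prod_le_prod_of_subset_of_one_le' (filter_subset _ _) fun ℓ hℓ _ => (hS ℓ hℓ).one_le,
    IsCoprime.prod_right fun ℓ hℓ => ?_⟩
  have hℓ' : Prime (ℓ : ℤ) := Nat.prime_iff_prime_int.mp (hS ℓ hℓ)
  rw [isCoprime_comm, hℓ'.coprime_iff_not_dvd]
  by_cases hu : (ℓ : ℤ) ∣ u
  · have hv : ¬ (ℓ : ℤ) ∣ v := fun hv => hℓ'.not_isUnit (huv.isUnit_of_dvd' hu hv)
    have hk : ¬ (ℓ : ℤ) ∣ k := by
      rw [Int.natCast_dvd_natCast, (Nat.prime_iff.mp (hS ℓ hℓ)).dvd_finsetProd_iff]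
      rintro ⟨ℓ', hℓ', hdvd⟩
      obtain ⟨hℓ'S, hℓ'u⟩ := mem_filter.mp hℓ'
      rw [(Nat.prime_dvd_prime_iff_eq (hS ℓ hℓ) (hS ℓ' hℓ'S)).mp hdvd] at hu
      exact hℓ'u hu
    exact fun h => hℓ'.not_dvd_mul hk hv ((dvd_add_right hu).mp h)
  · have hk : (ℓ : ℤ) ∣ k :=
      Int.natCast_dvd_natCast.mpr (dvd_prod_of_mem _ (mem_filter.mpr ⟨hℓ, hu⟩))
    exact fun h => hu ((dvd_add_left (hk.mul_right v)).mp h)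

theorem exists_le_card_forall_not_dvd_add_mul_s1 {a d : ℤ} (had : IsCoprime a d) {B : Finset ℕ}
    (hB : ∀ ℓ ∈ B, ℓ.Prime ∧ #B < ℓ) : ∃ j ≤ #B, ∀ ℓ ∈ B, ¬ (ℓ : ℤ) ∣ a + j * d := by
  by_contra! h
  choose! f hfB hf using h
  obtain ⟨x, hx, y, hy, hxy, hfxy⟩ := exists_ne_map_eq_of_card_lt_of_maps_to
    (s := range (#B + 1)) (by simp) fun j hj => hfB j (Nat.lt_succ_iff.mp (mem_range.mp hj))
  rw [mem_range] at hx hy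
  obtain ⟨hℓ, hBℓ⟩ := hB _ (hfB x (by omega))
  have hdvd := (Nat.prime_iff_prime_int.mp hℓ).dvd_sub_of_dvd_add_mul had (hf x (by omega))
    (hfxy ▸ hf y (by omega))
  have := Int.eq_zero_of_abs_lt_dvd hdvd (abs_lt.mpr ⟨by omega, by omega⟩)
  omega

theorem Int.isCoprime_natCast_of_forall_primeFactors {z : ℤ} {D : ℕ} (hD : D ≠ 0)
    (h : ∀ ℓ ∈ D.primeFactors, ¬ (ℓ : ℤ) ∣ z) : IsCoprime z D := by
  rw [Int.isCoprime_iff_nat_coprime, Int.natAbs_natCast]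
  exact Nat.coprime_of_dvd fun ℓ hℓ hz hℓD =>
    h ℓ (Nat.mem_primeFactors.mpr ⟨hℓ, hℓD, hD⟩) (Int.natCast_dvd.mpr hz)

theorem Nat.pow_card_primeFactors_gt_le {D : ℕ} (hD : D ≠ 0) (T : ℕ) :
    (T + 1) ^ #{ℓ ∈ D.primeFactors | T < ℓ} ≤ D :=
  calc (T + 1) ^ #{ℓ ∈ D.primeFactors | T < ℓ}
      ≤ ∏ ℓ ∈ D.primeFactors with T < ℓ, ℓ :=
        pow_card_le_prod _ _ _ fun _ hℓ => (mem_filter.mp hℓ).2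
    _ ≤ ∏ ℓ ∈ D.primeFactors, ℓ := prod_le_prod_of_subset_of_one_le' (filter_subset _ _)
        fun _ hℓ _ => (Nat.prime_of_mem_primeFactors hℓ).one_le
    _ ≤ D := Nat.le_of_dvd (Nat.pos_of_ne_zero hD) D.prod_primeFactors_dvd

theorem Nat.prod_primeFactors_le_le_four_pow (D T : ℕ) :
    ∏ ℓ ∈ D.primeFactors with ℓ ≤ T, ℓ ≤ 4 ^ T :=
  calc ∏ ℓ ∈ D.primeFactors with ℓ ≤ T, ℓ ≤ primorial T := by
        refine prod_le_prod_of_subset_of_one_le' (fun ℓ hℓ => ?_)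
          fun _ hℓ _ => (mem_filter.mp hℓ).2.one_le
        simp only [mem_filter, mem_range] at hℓ ⊢
        exact ⟨by omega, Nat.prime_of_mem_primeFactors hℓ.1⟩
    _ ≤ 4 ^ T := primorial_le_four_pow T

theorem exists_isCoprime_add_mul_le_eight_pow {u v : ℤ} (huv : IsCoprime u v) {D T : ℕ}
    (hD : D ≠ 0) (hDT : D < (T + 1) ^ (T + 1)) :
    ∃ k : ℕ, 1 ≤ k ∧ k ≤ 8 ^ T ∧ IsCoprime (u + k * v) D := by
  set S := {ℓ ∈ D.primeFactors | ℓ ≤ T}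
  set B := {ℓ ∈ D.primeFactors | T < ℓ}
  set P := ∏ ℓ ∈ S, ℓ
  have hB : #B ≤ T := by
    have h := (Nat.pow_card_primeFactors_gt_le hD T).trans_lt hDT
    rcases T.eq_zero_or_pos with rfl | hT
    · omega
    · exact Nat.lt_succ_iff.mp ((Nat.pow_lt_pow_iff_right (by omega)).mp h)
  obtain ⟨k₀, hk₀, hk₀P, hcop⟩ := exists_isCoprime_add_mul_prod (S := S)
    (fun ℓ hℓ => Nat.prime_of_mem_primeFactors (mem_filter.mp hℓ).1) huv
  have had : IsCoprime (u + k₀ * v) (P * v) := by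
    push_cast [P]
    exact hcop.mul_right (huv.add_mul_right_left _)
  obtain ⟨j, hj, hjB⟩ := exists_le_card_forall_not_dvd_add_mul_s1 had fun ℓ hℓ =>
    ⟨Nat.prime_of_mem_primeFactors (mem_filter.mp hℓ).1, hB.trans_lt (mem_filter.mp hℓ).2⟩
  refine ⟨k₀ + j * P, by omega, ?_, ?_⟩
  · calc k₀ + j * P ≤ P + T * P := add_le_add hk₀P (Nat.mul_le_mul_right P (hj.trans hB))
      _ = (T + 1) * P := by ring
      _ ≤ 2 ^ T * 4 ^ T :=
        Nat.mul_le_mul Nat.lt_two_pow_self (Nat.prod_primeFactors_le_le_four_pow D T)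
      _ = 8 ^ T := by rw [← mul_pow]; norm_num
  · have hk : u + ((k₀ + j * P : ℕ) : ℤ) * v = u + k₀ * v + j * (P * v) := by push_cast; ring
    refine hk ▸ Int.isCoprime_natCast_of_forall_primeFactors hD fun ℓ hℓ => ?_
    rcases le_or_gt ℓ T with hℓT | hℓT
    · refine (Nat.prime_iff_prime_int.mp (Nat.prime_of_mem_primeFactors hℓ)).not_dvd_add_mul_of_dvd
        had (Dvd.dvd.mul_right ?_ v) _
      exact Int.natCast_dvd_natCast.mpr (dvd_prod_of_mem _ (mem_filter.mpr ⟨hℓ, hℓT⟩))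
    · exact hjB ℓ (mem_filter.mpr ⟨hℓ, hℓT⟩)

theorem Nat.exists_pow_self_le_lt_succ_pow_succ {D : ℕ} (hD : 0 < D) :
    ∃ T, 1 ≤ T ∧ T ^ T ≤ D ∧ D < (T + 1) ^ (T + 1) := by
  have hex : ∃ T, D < (T + 1) ^ (T + 1) :=
    ⟨D, Nat.lt_succ_self D |>.trans_le (Nat.le_self_pow (Nat.succ_ne_zero D) _)⟩
  obtain ⟨T, hT⟩ : ∃ T, Nat.find hex = T + 1 :=
    Nat.exists_eq_succ_of_ne_zero fun h => by simpa [h, hD.ne'] using Nat.find_spec hex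
  refine ⟨T + 1, by omega, ?_, hT ▸ Nat.find_spec hex⟩
  simpa using Nat.find_min hex (hT ▸ Nat.lt_succ_self T)

theorem exists_eight_pow_le_mul_rpow {ε : ℝ} (hε : 0 < ε) :
    ∃ C : ℝ, 0 < C ∧ ∀ T : ℕ, 1 ≤ T → (8 : ℝ) ^ T ≤ C * ((T : ℝ) ^ T) ^ ε := by
  set N := ⌈(8 : ℝ) ^ ε⁻¹⌉₊
  refine ⟨8 ^ N, by positivity, fun T hT => ?_⟩
  have hT1 : (1 : ℝ) ≤ T := by exact_mod_cast hT
  rw [← Real.rpow_pow_comm (by positivity)]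
  have hTε : 1 ≤ (T : ℝ) ^ ε := Real.one_le_rpow hT1 hε.le
  rcases le_or_gt N T with hNT | hTN
  · have h8 : (8 : ℝ) ≤ (T : ℝ) ^ ε := by
      calc (8 : ℝ) = ((8 : ℝ) ^ ε⁻¹) ^ ε := by
            rw [← Real.rpow_mul (by norm_num), inv_mul_cancel₀ hε.ne', Real.rpow_one]
        _ ≤ (T : ℝ) ^ ε := by
          gcongr
          exact (Nat.le_ceil _).trans (by exact_mod_cast hNT)
    calc (8 : ℝ) ^ T ≤ ((T : ℝ) ^ ε) ^ T := by gcongr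
      _ ≤ 8 ^ N * ((T : ℝ) ^ ε) ^ T :=
        le_mul_of_one_le_left (by positivity) (one_le_pow₀ (by norm_num))
  · calc (8 : ℝ) ^ T ≤ 8 ^ N := pow_le_pow_right₀ (by norm_num) hTN.le
      _ ≤ 8 ^ N * ((T : ℝ) ^ ε) ^ T := le_mul_of_one_le_right (by positivity) (one_le_pow₀ hTε)

theorem exists_isCoprime_add_mul_le_mul_rpow {ε : ℝ} (hε : 0 < ε) :
    ∃ C : ℝ, 0 < C ∧ ∀ D : ℕ, 0 < D → ∀ u v : ℤ, IsCoprime u v →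
      ∃ k : ℕ, 1 ≤ k ∧ (k : ℝ) ≤ C * (D : ℝ) ^ ε ∧ IsCoprime (u + k * v) D := by
  obtain ⟨C, hC, hCT⟩ := exists_eight_pow_le_mul_rpow hε
  refine ⟨C, hC, fun D hD u v huv => ?_⟩
  obtain ⟨T, hT, hTD, hDT⟩ := Nat.exists_pow_self_le_lt_succ_pow_succ hD
  obtain ⟨k, hk, hkT, hkD⟩ := exists_isCoprime_add_mul_le_eight_pow huv hD.ne' hDT
  refine ⟨k, hk, ?_, hkD⟩
  calc (k : ℝ) ≤ 8 ^ T := by exact_mod_cast hkT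
    _ ≤ C * ((T : ℝ) ^ T) ^ ε := hCT T hT
    _ ≤ C * (D : ℝ) ^ ε := by gcongr; exact_mod_cast hTD

theorem Int.exists_mul_sub_mul_eq {p q : ℤ} (hpq : IsCoprime p q) (hq : 0 < q) (d : ℤ) :
    ∃ r s : ℤ, 0 ≤ s ∧ s < q ∧ p * s - r * q = d := by
  obtain ⟨α, β, h⟩ := hpq
  refine ⟨-(d * β) - d * α / q * p, d * α % q, Int.emod_nonneg _ hq.ne', Int.emod_lt_of_pos _ hq,
    ?_⟩
  linear_combination p * Int.emod_def (d * α) q + d * h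

theorem isCoprime_of_isUnit_mul_sub_mul {R : Type*} [CommRing R] {p q r s : R}
    (h : IsUnit (p * s - r * q)) : IsCoprime r s ∧ IsCoprime r p := by
  obtain ⟨e, he⟩ := h
  refine ⟨⟨-(q * ↑e⁻¹), p * ↑e⁻¹, ?_⟩, ⟨-(q * ↑e⁻¹), s * ↑e⁻¹, ?_⟩⟩ <;>
    linear_combination (↑e⁻¹ : R) * he.symm + e.inv_mul

theorem abs_mul_sub_le_half_of_mul_sub_mul_eq {x : ℝ} {p r : ℤ} {q s k : ℕ} (hq : 2 ≤ q)
    (hsq : s < q) (hdet : p * s - r * q = if 0 ≤ q * x - p then -1 else 1)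
    (happrox : (k + 1) * |q * x - p| ≤ 1 / 2) :
    |((k * q + s : ℕ) : ℝ) * x - (r + k * p : ℤ)| ≤ 1 / 2 := by
  set δ := (q : ℝ) * x - p
  set b : ℝ := ((k * q + s : ℕ) : ℝ)
  have hq2 : (2 : ℝ) ≤ q := by exact_mod_cast hq
  have hb : b ≤ (k + 1) * q := by
    push_cast [b]
    nlinarith [(Nat.cast_lt (α := ℝ)).mpr hsq]
  have hbδ : b * |δ| ≤ q / 2 :=
    calc b * |δ| ≤ (k + 1) * q * |δ| := by gcongr
      _ = q * ((k + 1) * |δ|) := by ring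
      _ ≤ q * (1 / 2) := by gcongr
      _ = q / 2 := by ring
  -- `q (b x - a) = b δ + (p s - r q)`, and `p s - r q = ±1` has the sign opposite to `δ`
  have hq_mul : q * |b * x - (r + k * p : ℤ)| = |b * |δ| - 1| := by
    rw [← abs_of_pos (by positivity : (0 : ℝ) < q), ← abs_mul]
    split_ifs at hdet with hδ
    · have hdetR : (p : ℝ) * s - r * q = -1 := by exact_mod_cast hdet
      rw [abs_of_nonneg hδ]
      congr 1
      push_cast [b, δ]
      linear_combination hdetR
    · have hdetR : (p : ℝ) * s - r * q = 1 := by exact_mod_cast hdet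
      rw [abs_of_neg (not_le.mp hδ), ← abs_neg]
      congr 1
      push_cast [b, δ]
      linear_combination -hdetR
  have hle : |b * |δ| - 1| ≤ q * (1 / 2) :=
    abs_le.mpr ⟨by nlinarith [abs_nonneg δ, show (0 : ℝ) ≤ b by positivity], by linarith⟩
  exact le_of_mul_le_mul_left (hq_mul ▸ hle) (by positivity)

theorem exists_isCoprime_numerator_of_approx {x K : ℝ} {D : ℕ} {p : ℤ} {q : ℕ}
    (hpq : IsCoprime p q) (hq : 2 ≤ q)
    (hK : ∀ u v : ℤ, IsCoprime u v → ∃ k : ℕ, 1 ≤ k ∧ (k : ℝ) ≤ K ∧ IsCoprime (u + k * v) D)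
    (happrox : (K + 1) * |q * x - p| ≤ 1 / 2) :
    ∃ (b : ℕ) (a : ℤ), 1 ≤ b ∧ (b : ℝ) ≤ (K + 1) * q ∧ IsCoprime a (b * D) ∧
      |b * x - a| ≤ 1 / 2 := by
  set d : ℤ := if 0 ≤ (q : ℝ) * x - p then -1 else 1
  have hd : IsUnit d := by unfold d; split_ifs <;> simp
  obtain ⟨r, s, hs, hsq, hdet⟩ := Int.exists_mul_sub_mul_eq hpq (by omega) d
  lift s to ℕ using hs
  obtain ⟨k, hk, hkK, hkD⟩ := hK r p (isCoprime_of_isUnit_mul_sub_mul (hdet ▸ hd)).2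
  have hdet' : p * ((k * q + s : ℕ) : ℤ) - (r + k * p) * q = d := by
    push_cast
    linear_combination hdet
  refine ⟨k * q + s, r + k * p, by nlinarith, ?_, ?_,
    abs_mul_sub_le_half_of_mul_sub_mul_eq hq (by omega) hdet ?_⟩
  · have : (s : ℝ) < q := by exact_mod_cast hsq
    push_cast
    nlinarith
  · exact (isCoprime_of_isUnit_mul_sub_mul (hdet' ▸ hd)).1.mul_right hkD
  · calc ((k : ℝ) + 1) * |q * x - p| ≤ (K + 1) * |q * x - p| := by gcongr
      _ ≤ 1 / 2 := happrox

theorem Real.exists_rat_abs_den_mul_sub_num_le (x : ℝ) {n : ℕ} (hn : 0 < n) :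
    ∃ y : ℚ, y.den ≤ n ∧ |y.den * x - y.num| ≤ 1 / (n + 1) := by
  obtain ⟨y, hy, hyn⟩ := Real.exists_rat_abs_sub_le_and_den_le x hn
  have hden : (0 : ℝ) < y.den := by positivity
  refine ⟨y, hyn, ?_⟩
  calc |y.den * x - y.num| = |y.den * (x - y)| := by
        rw [mul_sub, Rat.cast_def, mul_div_cancel₀ _ hden.ne']
    _ = y.den * |x - y| := by rw [abs_mul, abs_of_pos hden]
    _ ≤ y.den * (1 / ((n + 1) * y.den)) := by gcongr
    _ = 1 / (n + 1) := by field_simp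

/-- Dirichlet approximation with numerator coprime to a given modulus D. -/
theorem dirichlet_approx_coprime_numerator :
    ∀ ε : ℝ, 0 < ε → ∃ C : ℝ, 0 < C ∧
      ∀ (x : ℝ) (D : ℕ), 0 < D →
        (∃ c : ℤ, |x - (c : ℝ)| ≤ 1 / (2 * (1 + C * (D : ℝ) ^ ε))) ∨
        (∃ (b : ℕ) (a : ℤ), 1 ≤ b ∧ (b : ℝ) ≤ 2 * (1 + C * (D : ℝ) ^ ε) ^ 2 ∧
          Int.gcd a ((b : ℤ) * (D : ℤ)) = 1 ∧ |(b : ℝ) * x - (a : ℝ)| ≤ 1 / 2) := by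
  intro ε hε
  obtain ⟨C, hC, hJ⟩ := exists_isCoprime_add_mul_le_mul_rpow hε
  refine ⟨C, hC, fun x D hD => ?_⟩
  set K := C * (D : ℝ) ^ ε
  have hK : 0 < K := by positivity
  obtain ⟨y, hyn, hy⟩ := Real.exists_rat_abs_den_mul_sub_num_le x (n := ⌊2 * (1 + K)⌋₊)
    (Nat.floor_pos.mpr (by linarith))
  have happrox : |y.den * x - y.num| ≤ 1 / (2 * (1 + K)) :=
    hy.trans (one_div_le_one_div_of_le (by positivity) (Nat.lt_floor_add_one _).le)
  rcases (Nat.one_le_iff_ne_zero.mpr y.den_nz).eq_or_lt with hy1 | hy2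
  · exact Or.inl ⟨y.num, by simpa [← hy1] using happrox⟩
  obtain ⟨b, a, hb, hbK, hab, hba⟩ := exists_isCoprime_numerator_of_approx
    (Int.isCoprime_iff_nat_coprime.mpr y.reduced) hy2 (hJ D hD) <|
      calc (K + 1) * |y.den * x - y.num| ≤ (K + 1) * (1 / (2 * (1 + K))) := by gcongr
        _ = 1 / 2 := by field_simp; ring
  refine Or.inr ⟨b, a, hb, ?_, Int.isCoprime_iff_gcd_eq_one.mp hab, hba⟩
  calc (b : ℝ) ≤ (K + 1) * y.den := hbK
    _ ≤ (K + 1) * (2 * (1 + K)) := by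
      gcongr
      exact (Nat.cast_le.mpr hyn).trans (Nat.floor_le (by positivity))
    _ = 2 * (1 + K) ^ 2 := by ring
end

section
/- Let r > 0 and let [[F̄, Ē],[E, F]] ∈ SU(1,1) with E ≠ 0. If the closed hyperbolic ball of radius r centered at 0 in the Poincaré disk intersects the isometric circle {z : |Ez + F| = 1}, i.e. if (|F| − 1)/|E| ≤ tanh(r/2), then |E| ≤ sinh(r). -/
/-!
Write `e = ‖E‖`, `f = ‖F‖`, `s = sinh (r/2)`, `c = cosh (r/2)`, so that both `(e, f)` and `(s, c)`
lie on the hyperbola `y² - x² = 1`. Clearing denominators, the hypothesis reads `c f ≤ s e + c`;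
squaring and substituting `f² = 1 + e²` leaves `e² (c² - s²) ≤ 2 s c e`, i.e. `e ≤ 2 s c = sinh r`.
-/

theorem le_two_mul_mul_of_sub_one_mul_le {e f s c : ℝ} (he : 0 < e) (hf : 0 ≤ f)
    (hfe : f ^ 2 - e ^ 2 = 1) (hc : 0 < c) (hcs : c ^ 2 - s ^ 2 = 1)
    (h : (f - 1) * c ≤ s * e) : e ≤ 2 * s * c := by
  have hsq : (c * f) ^ 2 ≤ (s * e + c) ^ 2 :=
    pow_le_pow_left₀ (by positivity) (by linarith) 2
  have he_sq : e * e ≤ e * (2 * s * c) := by nlinarith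
  exact le_of_mul_le_mul_left he_sq he

theorem Real.le_sinh_of_sub_one_div_le_tanh_half {x e f : ℝ} (he : 0 < e) (hf : 0 ≤ f)
    (hfe : f ^ 2 - e ^ 2 = 1) (h : (f - 1) / e ≤ Real.tanh (x / 2)) : e ≤ Real.sinh x := by
  rw [Real.tanh_eq_sinh_div_cosh, div_le_div_iff₀ he (Real.cosh_pos _)] at h
  rw [show x = 2 * (x / 2) by ring, Real.sinh_two_mul]
  exact le_two_mul_mul_of_sub_one_mul_le he hf hfe (Real.cosh_pos _)
    (Real.cosh_sq_sub_sinh_sq _) h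

theorem isometric_circle_radius_bound_general (r : ℝ) (E F : ℂ)
    (hSU : ‖F‖ ^ 2 - ‖E‖ ^ 2 = 1) (hE : E ≠ 0)
    (h : (‖F‖ - 1) / ‖E‖ ≤ Real.tanh (r / 2)) :
    ‖E‖ ≤ Real.sinh r :=
  Real.le_sinh_of_sub_one_div_le_tanh_half (norm_pos_iff.mpr hE) (norm_nonneg F) hSU h

/-- If the isometric circle of [[F̄,Ē],[E,F]] ∈ SU(1,1) meets the hyperbolic ball
of radius r around 0 in the Poincaré disk, i.e. (|F| − 1)/|E| ≤ tanh(r/2),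
then |E| ≤ sinh r. -/
theorem isometric_circle_radius_bound (r : ℝ) (hr : 0 < r) (E F : ℂ)
    (hSU : ‖F‖ ^ 2 - ‖E‖ ^ 2 = 1) (hE : E ≠ 0)
    (h : (‖F‖ - 1) / ‖E‖ ≤ Real.tanh (r / 2)) :
    ‖E‖ ≤ Real.sinh r :=
  isometric_circle_radius_bound_general r E F hSU hE h
end

section
/- For t ∈ ℝ and λ = 1/4 + t², writing s = 1/2 − it, the Legendre-function eigenvalue of the hyperbolic sphere-averaging operator satisfies: if 0 ≤ λ ≤ 1/4 (so s ∈ [1/2, 1] is real) then |P_{−1/2−it}(cosh T)| ≤ (T+1) e^{−(T/2)(1−√(1−4λ))} for all T ≥ 0. -/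
/-!
Write the base of the integrand as
`cosh T + sinh T cos θ = e^T cos²(θ/2) + e^{-T} sin²(θ/2)` and put `p = s - 1 ∈ [-1/2, 0]`.
The base is at least `e^{-T}`, so the integrand is at most `e^{-pT}`; this is used only on the
short interval `[π(1 - e^{-T}), π]`, which contributes `π e^{-(1+p)T} ≤ π e^{pT}`.
Elsewhere Jordan's inequality `cos(θ/2) ≥ 1 - θ/π` bounds the base below by `e^T (1 - θ/π)²`,
and since `2p ≥ -1` the integrand is at most `e^{pT} π/(π - θ)`, whose integral over
`[0, π(1 - e^{-T})]` is exactly `π T e^{pT}`.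
-/

open Real intervalIntegral Set

theorem integral_inv_sub_left {b a c : ℝ} (hb : b < c) (ha : a < c) :
    ∫ θ in b..a, (c - θ)⁻¹ = log ((c - b) / (c - a)) := by
  rw [integral_comp_sub_left (fun x => x⁻¹) c, integral_inv]
  intro h0
  rcases le_total (c - a) (c - b) with h | h
  · rw [uIcc_of_le h] at h0; linarith [h0.1]
  · rw [uIcc_of_ge h] at h0; linarith [h0.1]

theorem cosh_add_sinh_mul_cos_eq (T θ : ℝ) :
    cosh T + sinh T * cos θ = exp T * cos (θ / 2) ^ 2 + exp (-T) * sin (θ / 2) ^ 2 := by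
  have hcos : cos θ = 2 * cos (θ / 2) ^ 2 - 1 := by
    rw [← cos_two_mul, mul_div_cancel₀ θ two_ne_zero]
  rw [sin_sq, hcos, cosh_eq, sinh_eq]
  ring

theorem exp_neg_le_cosh_add_sinh_mul_cos {T : ℝ} (hT : 0 ≤ T) (θ : ℝ) :
    exp (-T) ≤ cosh T + sinh T * cos θ := by
  have hexp : exp (-T) ≤ exp T := exp_le_exp.mpr (by linarith)
  calc exp (-T) = exp (-T) * cos (θ / 2) ^ 2 + exp (-T) * sin (θ / 2) ^ 2 := by
        rw [← mul_add, cos_sq_add_sin_sq, mul_one]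
    _ ≤ exp T * cos (θ / 2) ^ 2 + exp (-T) * sin (θ / 2) ^ 2 := by gcongr
    _ = cosh T + sinh T * cos θ := (cosh_add_sinh_mul_cos_eq T θ).symm

theorem one_sub_div_pi_le_cos_half {θ : ℝ} (h0 : 0 ≤ θ) (hπ : θ ≤ π) :
    1 - θ / π ≤ cos (θ / 2) := by
  have := one_sub_mul_le_cos (x := θ / 2) (by linarith) (by linarith)
  rwa [show 2 / π * (θ / 2) = θ / π by ring] at this

theorem exp_mul_sq_le_cosh_add_sinh_mul_cos (T : ℝ) {θ : ℝ} (h0 : 0 ≤ θ) (hπ : θ ≤ π) :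
    exp T * (1 - θ / π) ^ 2 ≤ cosh T + sinh T * cos θ := by
  have hx : 0 ≤ 1 - θ / π := by
    rw [sub_nonneg, div_le_one pi_pos]; exact hπ
  rw [cosh_add_sinh_mul_cos_eq]
  have := pow_le_pow_left₀ hx (one_sub_div_pi_le_cos_half h0 hπ) 2
  nlinarith [exp_pos T, exp_pos (-T), sq_nonneg (sin (θ / 2))]

theorem cosh_add_sinh_mul_cos_rpow_le_exp {p T : ℝ} (hp : p ≤ 0) (hT : 0 ≤ T) (θ : ℝ) :
    (cosh T + sinh T * cos θ) ^ p ≤ exp (-p * T) := by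
  calc (cosh T + sinh T * cos θ) ^ p ≤ exp (-T) ^ p :=
        rpow_le_rpow_of_nonpos (exp_pos _) (exp_neg_le_cosh_add_sinh_mul_cos hT θ) hp
    _ = exp (-p * T) := by rw [← exp_mul]; ring_nf

theorem cosh_add_sinh_mul_cos_rpow_le_exp_mul_div {p T θ : ℝ} (hp₁ : -1 / 2 ≤ p) (hp₂ : p ≤ 0)
    (h0 : 0 ≤ θ) (hπ : θ < π) :
    (cosh T + sinh T * cos θ) ^ p ≤ exp (p * T) * (π / (π - θ)) := by
  set x := 1 - θ / π with hx
  have hx0 : 0 < x := by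
    simp only [x, sub_pos, div_lt_one pi_pos]; exact hπ
  have hx1 : x ≤ 1 := by simp only [x]; linarith [div_nonneg h0 pi_pos.le]
  calc (cosh T + sinh T * cos θ) ^ p ≤ (exp T * x ^ 2) ^ p :=
        rpow_le_rpow_of_nonpos (by positivity) (exp_mul_sq_le_cosh_add_sinh_mul_cos T h0 hπ.le) hp₂
    _ = exp (p * T) * x ^ (2 * p) := by
        rw [mul_rpow (exp_pos T).le (by positivity), ← exp_mul, mul_comm T, rpow_mul hx0.le]
        norm_cast
    _ ≤ exp (p * T) * x ^ (-1 : ℝ) :=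
        mul_le_mul_of_nonneg_left (rpow_le_rpow_of_exponent_ge hx0 hx1 (by linarith))
          (exp_pos _).le
    _ = exp (p * T) * (π / (π - θ)) := by
        rw [rpow_neg_one, inv_eq_one_div, hx, one_sub_div pi_ne_zero, one_div_div]

theorem integral_cosh_add_sinh_mul_cos_rpow_le {p T : ℝ} (hp₁ : -1 / 2 ≤ p) (hp₂ : p ≤ 0)
    (hT : 0 ≤ T) :
    ∫ θ in 0..π, (cosh T + sinh T * cos θ) ^ p ≤ π * ((T + 1) * exp (p * T)) := by
  set a := π * (1 - exp (-T))
  have hπa : π - a = π * exp (-T) := by ring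
  have ha0 : 0 ≤ a := mul_nonneg pi_pos.le (sub_nonneg.mpr (exp_le_one_iff.mpr (by linarith)))
  have haπ : a < π := by nlinarith [pi_pos, exp_pos (-T)]
  have hint : ∀ u v, IntervalIntegrable (fun θ => (cosh T + sinh T * cos θ) ^ p)
      MeasureTheory.volume u v := fun u v =>
    (Continuous.rpow_const (by fun_prop) fun θ => Or.inl
      (exp_pos _ |>.trans_le (exp_neg_le_cosh_add_sinh_mul_cos hT θ)).ne').intervalIntegrable u v
  have near : ∫ θ in 0..a, (cosh T + sinh T * cos θ) ^ p ≤ π * T * exp (p * T) := by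
    have hcont : ContinuousOn (fun θ => exp (p * T) * (π / (π - θ))) (uIcc 0 a) := by
      rw [uIcc_of_le ha0]
      exact continuousOn_const.mul <| continuousOn_const.div (by fun_prop)
        fun θ hθ => (sub_pos.mpr (hθ.2.trans_lt haπ)).ne'
    calc ∫ θ in 0..a, (cosh T + sinh T * cos θ) ^ p
        ≤ ∫ θ in 0..a, exp (p * T) * (π / (π - θ)) :=
          integral_mono_on ha0 (hint 0 a) hcont.intervalIntegrable fun θ hθ =>
            cosh_add_sinh_mul_cos_rpow_le_exp_mul_div hp₁ hp₂ hθ.1 (hθ.2.trans_lt haπ)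
      _ = exp (p * T) * (π * log ((π - 0) / (π - a))) := by
          simp_rw [div_eq_mul_inv π]
          rw [integral_const_mul, integral_const_mul, integral_inv_sub_left pi_pos haπ]
      _ = π * T * exp (p * T) := by
          rw [sub_zero, hπa, div_mul_cancel_left₀ pi_ne_zero, exp_neg, inv_inv, log_exp]
          ring
  have far : ∫ θ in a..π, (cosh T + sinh T * cos θ) ^ p ≤ π * exp (p * T) := by
    calc ∫ θ in a..π, (cosh T + sinh T * cos θ) ^ p
        ≤ ∫ θ in a..π, exp (-p * T) :=
          integral_mono_on haπ.le (hint a π) intervalIntegrable_const fun θ _ =>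
            cosh_add_sinh_mul_cos_rpow_le_exp hp₂ hT θ
      _ = π * exp (-(1 + p) * T) := by
          rw [integral_const, smul_eq_mul, hπa, mul_assoc, ← exp_add]
          ring_nf
      _ ≤ π * exp (p * T) := by
          gcongr
          nlinarith
  rw [← integral_add_adjacent_intervals (hint 0 a) (hint a π)]
  linarith

/-- The left side is `P_{s-1}(cosh T)` in Laplace's integral representation. -/
theorem legendre_eigenvalue_bound (s T : ℝ) (hs1 : 1 / 2 ≤ s) (hs2 : s ≤ 1)
    (hT : 0 ≤ T) :
    (1 / Real.pi) * ∫ θ in (0 : ℝ)..Real.pi,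
        (Real.cosh T + Real.sinh T * Real.cos θ) ^ (s - 1)
      ≤ (T + 1) * Real.exp (-(1 - s) * T) := by
  rw [one_div, inv_mul_le_iff₀ pi_pos, show -(1 - s) * T = (s - 1) * T by ring]
  exact integral_cosh_add_sinh_mul_cos_rpow_le (by linarith) (by linarith) hT
end
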